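/- Fix α > 0 and let f be the function determined by 1/f(z) = (1/(2π))·[ log((z+α)/z) + (2π−α)/(z+α) ] for z in the upper half-plane, extended continuously to the real axis near 0 from above, and write f(x) = u(x) + i·v(x) for real x < 0 near 0. Then u(x) = −2π/log|x| + O(1/log²|x|) as x → 0⁻. -/

import Mathlib

open Complex Filter Topology

/-- The Christoffel–Schwarz map `f` of the paper:
`1/f(z) = (1/(2π))·[log(z+α) − log z + (2π−α)/(z+α)]`, where `Complex.log`
is the branch with `log i = iπ/2` (the continuous extension to the real axis from above,
with `log((z+α)/z) = log(z+α) − log z` on the upper half-plane). -/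
noncomputable def fCS (α : ℝ) (z : ℂ) : ℂ :=
  2 * (Real.pi : ℂ) /
    (Complex.log (z + (α : ℂ)) - Complex.log z + ((2 * Real.pi - α : ℝ) : ℂ) / (z + (α : ℂ)))

/-!
On the negative axis the branch of `log` gives `log x = log |x| + iπ`, so for `-α < x < 0`
we get `f(x) = 2π / (w - iπ)` with `w = c(x) - log |x|`, where
`c(x) = log (x + α) + (2π - α)/(x + α)` is continuous, hence bounded, at `0`.
Thus `u = 2πw/(w² + π²)`, and since `w + log |x| = c` is bounded,
`u + 2π/log |x| = 2π (w c + π²) / (log |x| (w² + π²))`, which is `O(1/log² |x|)`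
because `w ≥ -log |x| / 2 → ∞`.
-/

open Real

lemma Complex.log_ofReal_of_neg {x : ℝ} (hx : x < 0) :
    Complex.log x = Real.log |x| + π * I := by
  apply Complex.ext <;> simp [Complex.log_re, Complex.log_im, Complex.arg_ofReal_of_neg hx]

lemma Complex.re_ofReal_div_sub_ofReal_mul_I (a w b : ℝ) :
    ((a : ℂ) / (w - b * I)).re = a * w / (w ^ 2 + b ^ 2) := by
  simp [Complex.div_re, Complex.normSq_apply]
  ring

lemma fCS_ofReal_of_neg {α x : ℝ} (hx : x < 0) (hxα : 0 < x + α) :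
    fCS α x = ((2 * π : ℝ) : ℂ) /
      (((Real.log (x + α) + (2 * π - α) / (x + α) - Real.log |x| : ℝ) : ℂ) - π * I) := by
  rw [fCS, ← Complex.ofReal_add, ← Complex.ofReal_log hxα.le, Complex.log_ofReal_of_neg hx,
    ← Complex.ofReal_div]
  push_cast
  ring

lemma abs_div_sq_add_sq_add_inv_le {b c L M : ℝ} (hc : |c| ≤ M) (hLM : L ≤ -(2 * M))
    (hL : L ≤ -1) :
    |(c - L) / ((c - L) ^ 2 + b ^ 2) + 1 / L| ≤ (2 * M + 4 * b ^ 2) / L ^ 2 := by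
  obtain ⟨w, rfl⟩ : ∃ w, c = w + L := ⟨c - L, by ring⟩
  rw [add_sub_cancel_right]
  obtain ⟨hcl, hcu⟩ := abs_le.mp hc
  have hM : 0 ≤ M := (abs_nonneg _).trans hc
  have hw : 1 / 2 ≤ w := by linarith
  have hLw : -L ≤ 2 * w := by linarith
  have hden : 0 < w ^ 2 + b ^ 2 := by positivity
  have hid : w / (w ^ 2 + b ^ 2) + 1 / L = (w * (w + L) + b ^ 2) / (L * (w ^ 2 + b ^ 2)) := by
    field_simp [(by linarith : L ≠ 0)]
    ring
  have hnum : |w * (w + L) + b ^ 2| ≤ w * M + b ^ 2 := by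
    exact abs_le.mpr ⟨by nlinarith, by nlinarith⟩
  rw [hid, abs_div, abs_mul, abs_of_neg (by linarith : L < 0), abs_of_pos hden,
    div_le_div_iff₀ (by nlinarith) (by nlinarith)]
  have hMw : w * M * -L ≤ 2 * M * w ^ 2 := by nlinarith [mul_nonneg hM (by linarith : 0 ≤ w)]
  have hbw : b ^ 2 * -L ≤ 4 * b ^ 2 * w ^ 2 := by
    nlinarith [mul_le_mul_of_nonneg_left hLw (sq_nonneg b),
      mul_nonneg (sq_nonneg b) (mul_nonneg (by linarith : 0 ≤ w) (by linarith : 0 ≤ 2 * w - 1))]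
  calc |w * (w + L) + b ^ 2| * L ^ 2 ≤ (w * M + b ^ 2) * -L * -L := by nlinarith [sq_nonneg L]
    _ ≤ (2 * M * w ^ 2 + 4 * b ^ 2 * w ^ 2) * -L := by nlinarith
    _ ≤ (2 * M + 4 * b ^ 2) * (-L * (w ^ 2 + b ^ 2)) := by
      nlinarith [mul_nonneg (mul_nonneg (by positivity : 0 ≤ 2 * M + 4 * b ^ 2)
        (by linarith : 0 ≤ -L)) (sq_nonneg b)]

/-- `u(x) = −2π/log|x| + O(1/log²|x|)` as `x → 0⁻`. -/
theorem stmt4 (α : ℝ) (hα : 0 < α) :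
    (fun x : ℝ => (fCS α (x : ℂ)).re - (-(2 * Real.pi) / Real.log |x|))
      =O[nhdsWithin 0 (Set.Iio (0 : ℝ))] (fun x : ℝ => 1 / (Real.log |x|) ^ 2) := by
  let c (x : ℝ) : ℝ := Real.log (x + α) + (2 * π - α) / (x + α)
  have hc : ContinuousAt c 0 := by
    have : (0 : ℝ) + α ≠ 0 := by linarith
    fun_prop (disch := exact this)
  obtain ⟨M, hM⟩ := hc.tendsto.abs.isBoundedUnder_le
  have hlog : Tendsto (fun x => Real.log |x|) (𝓝[<] 0) atBot := by
    simpa only [Real.log_abs] using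
      Real.tendsto_log_nhdsNE_zero.mono_left (nhdsLT_le_nhdsNE 0)
  refine .of_bound (2 * π * (2 * M + 4 * π ^ 2)) ?_
  filter_upwards [nhdsWithin_le_nhds (eventually_map.mp hM), Ioo_mem_nhdsLT (neg_lt_zero.2 hα),
    hlog.eventually_le_atBot (-(2 * M)), hlog.eventually_le_atBot (-1)]
    with x hcx ⟨hxα, hx⟩ hLM hL
  rw [fCS_ofReal_of_neg hx (by linarith), Complex.re_ofReal_div_sub_ofReal_mul_I]
  set L := Real.log |x|
  calc ‖2 * π * (c x - L) / ((c x - L) ^ 2 + π ^ 2) - -(2 * π) / L‖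
      = |2 * π * ((c x - L) / ((c x - L) ^ 2 + π ^ 2) + 1 / L)| := by
        rw [Real.norm_eq_abs]
        ring_nf
    _ = 2 * π * |(c x - L) / ((c x - L) ^ 2 + π ^ 2) + 1 / L| := by
        rw [abs_mul, abs_of_pos two_pi_pos]
    _ ≤ 2 * π * ((2 * M + 4 * π ^ 2) / L ^ 2) := by
        gcongr
        exact abs_div_sq_add_sq_add_inv_le hcx hLM hL
    _ = 2 * π * (2 * M + 4 * π ^ 2) * ‖1 / L ^ 2‖ := by
        rw [Real.norm_eq_abs, abs_of_nonneg (by positivity)]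
        ring
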